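/- Let θ₁⁰ > 0 be a positive real number. There exists a constant K > 0, depending only on θ₁⁰, such that for every real θ₁ with θ₁⁰/2 ≤ θ₁ ≤ 3θ₁⁰/2 and all probability measures g, g⁰ on [0,1], d_TV(q_{θ₁,1,g}, q_{θ₁⁰,1,g⁰}) ≥ K |θ₁ − θ₁⁰|³. (Key quantitative inequality in the proof of the paper's Proposition 4.1 on the contraction of the first Fourier coefficient.) -/

import Mathlib

open MeasureTheory Measure

noncomputable section

/-- The frequency-`k` marginal mixture density on `ℂ`:
`q_{θ,k,g}(z) = π⁻¹ ∫₀¹ exp(-|z - θ e^{-2πikφ}|²) dg(φ)`, for a mixing measure `g`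
(a measure on `ℝ` thought of as carried by `[0,1]`). -/
def qdens (θ : ℂ) (k : ℤ) (g : Measure ℝ) (z : ℂ) : ℝ :=
  (∫ φ, Real.exp (-(‖
      (z - θ * Complex.exp (-(2 * Real.pi * (k : ℝ) * φ : ℝ) * Complex.I))‖) ^ 2) ∂g) / Real.pi

/-- Total variation distance between densities on `ℂ`. -/
def dTVc (q₁ q₂ : ℂ → ℝ) : ℝ :=
  (1 / 2) * ∫ z : ℂ, |q₁ z - q₂ z|

/-- A probability measure on `[0,1]`, modelled as a probability measure on `ℝ`
giving no mass to the complement of `[0,1]`. -/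
def IsProbOn01 (g : Measure ℝ) : Prop :=
  IsProbabilityMeasure g ∧ g (Set.Icc (0 : ℝ) 1)ᶜ = 0

/-- The Fourier coefficients `cₙ(g) = ∫₀¹ e^{-2πint} dg(t)` of a measure `g`. -/
def fourierCoeffM (g : Measure ℝ) (n : ℤ) : ℂ :=
  ∫ t, Complex.exp (-(2 * Real.pi * (n : ℝ) * t : ℝ) * Complex.I) ∂g

/-!
The test function `w z = exp (-|z|²)` is bounded by `1`, so `|∫ w q₁ - ∫ w q₂| ≤ 2 d_TV(q₁, q₂)`.
Against a Gaussian mixture whose centres lie on the circle of radius `|θ|` it integrates to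
`exp (-θ²/2) / 2`, whatever the mixing measure. Hence
`4 d_TV ≥ |exp (-θ₁²/2) - exp (-θ₁⁰²/2)|`, which by the mean value theorem on `[θ₁⁰/2, 3θ₁⁰/2]` is
at least a constant times `|θ₁ - θ₁⁰|`; finally `|θ₁ - θ₁⁰|³ ≤ (θ₁⁰/2)² |θ₁ - θ₁⁰|` there.
-/

open Real

lemma integrable_exp_neg_norm_sub_sq (c : ℂ) : Integrable fun z : ℂ => rexp (-‖z - c‖ ^ 2) := by
  have h :=
    (GaussianFourier.integrable_cexp_neg_mul_sq_norm_add (V := ℂ) (b := 1) (by norm_num) 0 0).norm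
  have h₀ : Integrable fun z : ℂ => rexp (-‖z‖ ^ 2) := by
    simpa [Complex.norm_exp, ← Complex.ofReal_pow] using h
  exact h₀.comp_sub_right c

lemma integral_exp_neg_norm_sub_sq (c : ℂ) : ∫ z : ℂ, rexp (-‖z - c‖ ^ 2) = π := by
  rw [integral_sub_right_eq_self (fun z : ℂ => rexp (-‖z‖ ^ 2)) c]
  have := GaussianFourier.integral_rexp_neg_mul_sq_norm (V := ℂ) one_pos
  simp only [neg_mul, one_mul, Complex.finrank_real_complex] at this
  rw [this]
  norm_num

/-- Completing the square: `‖z‖² + ‖z - a‖² = 2‖z - a/2‖² + ‖a‖²/2`. -/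
lemma integral_exp_neg_norm_sq_mul_exp_neg_norm_sub_sq (a : ℂ) :
    ∫ z : ℂ, rexp (-‖z‖ ^ 2) * rexp (-‖z - a‖ ^ 2) = π / 2 * rexp (-‖a‖ ^ 2 / 2) := by
  have hsplit : ∀ z : ℂ, rexp (-‖z‖ ^ 2) * rexp (-‖z - a‖ ^ 2)
      = rexp (-‖a‖ ^ 2 / 2) * rexp (-2 * ‖z - (1 / 2 : ℝ) • a‖ ^ 2) := by
    intro z
    rw [← Real.exp_add, ← Real.exp_add, norm_sub_sq_real, norm_sub_sq_real,
      real_inner_smul_right, norm_smul]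
    simp only [norm_div, Real.norm_ofNat, norm_one]
    congr 1
    ring
  simp_rw [hsplit, integral_const_mul]
  rw [integral_sub_right_eq_self (fun z : ℂ => rexp (-2 * ‖z‖ ^ 2)),
    GaussianFourier.integral_rexp_neg_mul_sq_norm two_pos, Complex.finrank_real_complex]
  norm_num
  ring

section GaussianMixture

variable {α : Type*} [MeasurableSpace α] (g : Measure α) {c : α → ℂ}

lemma integrable_prod_exp_neg_norm_sub_sq [IsFiniteMeasure g] (hc : Measurable c) :
    Integrable (fun p : ℂ × α => rexp (-‖p.1 - c p.2‖ ^ 2)) ((volume : Measure ℂ).prod g) := by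
  have hm : AEStronglyMeasurable (fun p : ℂ × α => rexp (-‖p.1 - c p.2‖ ^ 2))
      ((volume : Measure ℂ).prod g) := by
    fun_prop
  refine (integrable_prod_iff' hm).2 ⟨.of_forall fun φ => integrable_exp_neg_norm_sub_sq (c φ), ?_⟩
  simp only [Real.norm_eq_abs, abs_of_pos (Real.exp_pos _), integral_exp_neg_norm_sub_sq]
  exact integrable_const π

lemma integrable_integral_exp_neg_norm_sub_sq [IsFiniteMeasure g] (hc : Measurable c) :
    Integrable fun z : ℂ => ∫ φ, rexp (-‖z - c φ‖ ^ 2) ∂g :=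
  (integrable_prod_exp_neg_norm_sub_sq g hc).integral_prod_left

lemma integral_exp_neg_norm_sq_mul_gaussian_mixture [IsProbabilityMeasure g] (hc : Measurable c)
    {r : ℝ} (hr : ∀ φ, ‖c φ‖ = r) :
    ∫ z : ℂ, rexp (-‖z‖ ^ 2) * ∫ φ, rexp (-‖z - c φ‖ ^ 2) ∂g = π / 2 * rexp (-r ^ 2 / 2) := by
  have hint : Integrable (fun p : ℂ × α => rexp (-‖p.1‖ ^ 2) * rexp (-‖p.1 - c p.2‖ ^ 2))
      ((volume : Measure ℂ).prod g) := by
    refine (integrable_prod_exp_neg_norm_sub_sq g hc).mono (by fun_prop) (.of_forall fun p => ?_)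
    simp only [norm_mul, Real.norm_eq_abs, abs_of_pos (Real.exp_pos _)]
    exact mul_le_of_le_one_left (Real.exp_pos _).le
      (Real.exp_le_one_iff.2 (neg_nonpos.2 (by positivity)))
  simp_rw [← integral_const_mul]
  rw [integral_integral_swap hint]
  simp_rw [integral_exp_neg_norm_sq_mul_exp_neg_norm_sub_sq, hr]
  simp

end GaussianMixture

lemma measurable_qdens_centre (θ : ℂ) (k : ℤ) :
    Measurable fun φ : ℝ => θ * Complex.exp (-(2 * π * (k : ℝ) * φ : ℝ) * Complex.I) := by
  fun_prop

lemma norm_qdens_centre (θ : ℂ) (k : ℤ) (φ : ℝ) :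
    ‖θ * Complex.exp (-(2 * π * (k : ℝ) * φ : ℝ) * Complex.I)‖ = ‖θ‖ := by
  rw [norm_mul, Complex.norm_exp]
  simp

lemma integrable_qdens (θ : ℂ) (k : ℤ) (g : Measure ℝ) [IsFiniteMeasure g] :
    Integrable (qdens θ k g) :=
  (integrable_integral_exp_neg_norm_sub_sq g (measurable_qdens_centre θ k)).div_const π

lemma integral_exp_neg_norm_sq_mul_qdens (θ : ℂ) (k : ℤ) (g : Measure ℝ) [IsProbabilityMeasure g] :
    ∫ z : ℂ, rexp (-‖z‖ ^ 2) * qdens θ k g z = rexp (-‖θ‖ ^ 2 / 2) / 2 := by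
  simp_rw [qdens, mul_div_assoc', integral_div,
    integral_exp_neg_norm_sq_mul_gaussian_mixture g (measurable_qdens_centre θ k)
      (norm_qdens_centre θ k)]
  field_simp

lemma abs_integral_mul_sub_integral_mul_le {β : Type*} [MeasurableSpace β] {μ : Measure β}
    {w f₁ f₂ : β → ℝ} (hw : AEStronglyMeasurable w μ) (hw₁ : ∀ x, |w x| ≤ 1)
    (hf₁ : Integrable f₁ μ) (hf₂ : Integrable f₂ μ) :
    |∫ x, w x * f₁ x ∂μ - ∫ x, w x * f₂ x ∂μ| ≤ ∫ x, |f₁ x - f₂ x| ∂μ := by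
  have hbound : ∀ᵐ x ∂μ, ‖w x‖ ≤ 1 := .of_forall hw₁
  rw [← integral_sub (hf₁.bdd_mul hw hbound) (hf₂.bdd_mul hw hbound), ← Real.norm_eq_abs]
  refine norm_integral_le_of_norm_le (hf₁.sub hf₂).abs (.of_forall fun x => ?_)
  rw [← mul_sub, norm_mul, Real.norm_eq_abs, Real.norm_eq_abs]
  exact mul_le_of_le_one_left (abs_nonneg _) (hw₁ x)

/-- Mean value theorem: on `[L, U]` the derivative `-t e^{-t²/2}` has absolute value at least
`L e^{-U²/2}`. -/
lemma mul_abs_sub_le_abs_exp_neg_sq_div_two_sub {L U a b : ℝ} (hL : 0 ≤ L)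
    (ha : a ∈ Set.Icc L U) (hb : b ∈ Set.Icc L U) :
    L * rexp (-U ^ 2 / 2) * |a - b| ≤ |rexp (-a ^ 2 / 2) - rexp (-b ^ 2 / 2)| := by
  have hderiv : ∀ t, HasDerivAt (fun t => -rexp (-t ^ 2 / 2)) (t * rexp (-t ^ 2 / 2)) t :=
    fun t => (((hasDerivAt_id t).pow 2).neg.div_const 2).exp.neg.congr_deriv (by
      simp only [Pi.neg_apply, Pi.pow_apply, id_eq, Nat.cast_ofNat, Nat.add_one_sub_one, pow_one,
        mul_one]
      ring)
  have hmono := (convex_Icc L U).mul_sub_le_image_sub_of_le_deriv (f := fun t => -rexp (-t ^ 2 / 2))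
    (by fun_prop) (fun t _ => (hderiv t).differentiableAt.differentiableWithinAt)
    (C := L * rexp (-U ^ 2 / 2)) (fun t ht => by
      rw [interior_Icc] at ht
      rw [(hderiv t).deriv]
      have ht₀ : 0 ≤ t := hL.trans ht.1.le
      exact mul_le_mul ht.1.le (Real.exp_le_exp.2 (by nlinarith [ht.2])) (Real.exp_pos _).le ht₀)
  rcases le_total a b with hab | hab
  · have := hmono a ha b hb hab
    rw [abs_of_nonpos (sub_nonpos.2 hab)]
    exact (by linarith : _ ≤ _).trans (le_abs_self _)
  · have := hmono b hb a ha hab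
    rw [abs_of_nonneg (sub_nonneg.2 hab)]
    exact (by linarith : _ ≤ _).trans (neg_le_abs _)

/-- **Key inequality in the proof of Proposition 4.1 of the paper.** For `θ₁⁰ > 0` there is
`K > 0` (depending only on `θ₁⁰`) such that for every `θ₁ ∈ [θ₁⁰/2, 3θ₁⁰/2]` and all probability
measures `g, g⁰` on `[0,1]`, `d_TV(q_{θ₁,1,g}, q_{θ₁⁰,1,g⁰}) ≥ K |θ₁ - θ₁⁰|³`. -/
theorem tv_lower_bound_first_coeff (θ₁0 : ℝ) (hθ₁0 : 0 < θ₁0) :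
    ∃ K : ℝ, 0 < K ∧
      ∀ θ₁ : ℝ, θ₁0 / 2 ≤ θ₁ → θ₁ ≤ 3 * θ₁0 / 2 →
        ∀ g g0 : Measure ℝ, IsProbOn01 g → IsProbOn01 g0 →
          K * |θ₁ - θ₁0| ^ 3 ≤ dTVc (qdens (θ₁ : ℂ) 1 g) (qdens (θ₁0 : ℂ) 1 g0) := by
  refine ⟨rexp (-(3 * θ₁0 / 2) ^ 2 / 2) / (2 * θ₁0), by positivity, ?_⟩
  intro θ₁ hlo hhi g g0 ⟨hg, _⟩ ⟨hg0, _⟩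
  have htest := abs_integral_mul_sub_integral_mul_le (w := fun z : ℂ => rexp (-‖z‖ ^ 2))
    (by fun_prop) (fun z => by simp [abs_of_pos (Real.exp_pos _)])
    (integrable_qdens (θ₁ : ℂ) 1 g) (integrable_qdens (θ₁0 : ℂ) 1 g0)
  simp only [integral_exp_neg_norm_sq_mul_qdens, Complex.norm_real, Real.norm_eq_abs, sq_abs,
    ← sub_div, abs_div, abs_two] at htest
  have hgap := mul_abs_sub_le_abs_exp_neg_sq_div_two_sub (L := θ₁0 / 2) (U := 3 * θ₁0 / 2)
    (a := θ₁) (b := θ₁0) (by positivity) ⟨hlo, hhi⟩ ⟨by linarith, by linarith⟩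
  have hclose : |θ₁ - θ₁0| ≤ θ₁0 / 2 := abs_le.2 ⟨by linarith, by linarith⟩
  have hcube : |θ₁ - θ₁0| ^ 3 ≤ (θ₁0 / 2) ^ 2 * |θ₁ - θ₁0| := by
    rw [pow_succ]
    gcongr
  calc rexp (-(3 * θ₁0 / 2) ^ 2 / 2) / (2 * θ₁0) * |θ₁ - θ₁0| ^ 3
      ≤ rexp (-(3 * θ₁0 / 2) ^ 2 / 2) / (2 * θ₁0) * ((θ₁0 / 2) ^ 2 * |θ₁ - θ₁0|) := by
        gcongr
    _ = θ₁0 / 2 * rexp (-(3 * θ₁0 / 2) ^ 2 / 2) * |θ₁ - θ₁0| / 4 := by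
        field_simp
        ring
    _ ≤ dTVc (qdens (θ₁ : ℂ) 1 g) (qdens (θ₁0 : ℂ) 1 g0) := by
        unfold dTVc
        linarith

end
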